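/- Let M = (Q, s, Δ) be a finite automaton over the binary alphabet and let B ⊆ Q be a strongly accessible set of states. Let A_{B,ws} := {x ∈ {0,1}^ω : V_B(x) is weakly sparse}. Then for every ε > 0 there exists a bit-prediction strategy S such that Succ^bp(S, A_{B,ws}) > 1 − ε. -/

import Mathlib

/-- A bit-prediction strategy: for each sequence `x` (0-indexed: `x i` is bit `x_{i+1}`),
a probability distribution on `(ℕ × {0,1}) ∪ {∞}`, where `some (i, z)` means
"after seeing `x_1, …, x_{i}` (indices `< i`), predict that bit `x_{i+1}` equals `z`",
and `none` means "never predict".  The prediction at position `i` may depend only on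
the first `i` bits. -/
structure BitPredStrategy where
  prob : (ℕ → Bool) → Option (ℕ × Bool) → ℝ
  nonneg : ∀ x o, 0 ≤ prob x o
  total : ∀ x, ∑' o : Option (ℕ × Bool), prob x o = 1
  adapted : ∀ x x' : ℕ → Bool, ∀ i : ℕ, ∀ z : Bool,
    (∀ j, j < i → x j = x' j) → prob x (some (i, z)) = prob x' (some (i, z))

/-- Success probability of a bit-prediction strategy: the probability of predicting
some bit of `x` correctly. -/
noncomputable def succBP (S : BitPredStrategy) (x : ℕ → Bool) : ℝ :=
  ∑' i : ℕ, S.prob x (some (i, x i))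

/-- `cars x t` is `N_t(x) = x_1 + ⋯ + x_t`. -/
def cars (x : ℕ → Bool) (t : ℕ) : ℕ :=
  ((Finset.range t).filter (fun i => x i = true)).card

/-- `x` is weakly sparse if `lim_{s→∞} inf_{t ≥ s} N_t(x)/t = 0`. -/
def weaklySparse (x : ℕ → Bool) : Prop :=
  Filter.liminf (fun t : ℕ => (cars x t : ℝ) / t) Filter.atTop = 0

/-- The state of the automaton with transition function `Δ` and start state `s`
after reading `t` bits of `x`: `q_0(x) = s`, `q_{t+1}(x) = Δ(q_t(x), x_{t+1})`. -/
def autoRun {Q : Type*} (Δ : Q → Bool → Q) (s : Q) (x : ℕ → Bool) : ℕ → Q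
  | 0 => s
  | t + 1 => Δ (autoRun Δ s x t) (x t)

/-!
Away from `B` the strategy bets a fraction `κ w^H ϑ^d` of its unbet mass (the reserve) against
the greedy bit, the first bit of a shortest path to `B`; here `d` is the distance to `B` and `H`
is a credit that grows by `L` at each visit to `B` and drops by one at every other step.
Losing a bet means moving one step closer to `B`, which multiplies the next offered stake by
`(1 - κ) / ϑ`; so the offered stake is a potential that pays for each loss many times over,
except at visits to `B`, and since `w^H` halves at each visit these cost only `O(κ)` in total.
If the reserve stayed bounded below, stakes made without credit would be bounded below as well,
so eventually the credit would never run out; this forces the visits to `B` to have positive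
lower density, contradicting weak sparsity. Hence all of the mass is eventually bet, and all but
a small fraction of it is won.
-/

open Filter Finset

theorem cars_succ (y : ℕ → Bool) (T : ℕ) :
    cars y (T + 1) = cars y T + if y T then 1 else 0 := by
  rw [cars, cars, range_add_one, filter_insert]
  split
  · rw [card_insert_of_notMem (by simp)]
  · rfl

theorem cars_le (y : ℕ → Bool) (T : ℕ) : cars y T ≤ T :=
  (card_filter_le _ _).trans (card_range T).le

theorem weaklySparse.frequently_lt {y : ℕ → Bool} (hy : weaklySparse y) (C a : ℕ) :
    ∃ᶠ T in atTop, C + a * cars y T < T := by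
  have hbdd : IsCoboundedUnder (· ≥ ·) atTop fun T : ℕ => (cars y T : ℝ) / T :=
    (isBoundedUnder_of ⟨1, fun T =>
      div_le_one_of_le₀ (mod_cast cars_le y T) T.cast_nonneg⟩).isCoboundedUnder_ge
  have hδ : (0 : ℝ) < (2 * ((a : ℝ) + 1))⁻¹ := by positivity
  rw [← hy] at hδ
  refine ((frequently_lt_of_liminf_lt hbdd hδ).and_eventually
    (eventually_gt_atTop (2 * C))).mono fun T ⟨hT, hTC⟩ => ?_
  have hTpos : (0 : ℝ) < T := by exact_mod_cast (Nat.zero_le _).trans_lt hTC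
  have hTC' : (2 * C : ℝ) < T := by exact_mod_cast hTC
  rw [div_lt_iff₀ hTpos] at hT
  have hcars : (a : ℝ) * cars y T ≤ T / 2 := by
    calc (a : ℝ) * cars y T ≤ (a + 1) * cars y T := by gcongr; linarith
      _ ≤ (a + 1) * ((2 * ((a : ℝ) + 1))⁻¹ * T) := by gcongr
      _ = T / 2 := by field_simp
  exact_mod_cast (show ((C + a * cars y T : ℕ) : ℝ) < T by push_cast; linarith)

def Nonanticipating {α : Type*} (f : (ℕ → Bool) → ℕ → α) : Prop :=
  ∀ x x' i, (∀ j < i, x j = x' j) → f x i = f x' i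

theorem Nonanticipating.comp {α β : Type*} {f : (ℕ → Bool) → ℕ → α} (hf : Nonanticipating f)
    (φ : α → β) : Nonanticipating fun x t => φ (f x t) :=
  fun x x' i h => congrArg φ (hf x x' i h)

theorem Nonanticipating.eq_of_le {α : Type*} {f : (ℕ → Bool) → ℕ → α} (hf : Nonanticipating f)
    {x x' : ℕ → Bool} {i : ℕ} (h : ∀ j < i, x j = x' j) {t : ℕ} (ht : t ≤ i) :
    f x t = f x' t :=
  hf x x' t fun j hj => h j (by omega)

namespace BitPredStrategy

variable (m : (ℕ → Bool) → ℕ → ℝ) (g : (ℕ → Bool) → ℕ → Bool)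
  (hm : ∀ x t, 0 ≤ m x t) (hm_le : ∀ x T, ∑ t ∈ range T, m x t ≤ 1)
  (hm_adapted : Nonanticipating m) (hg_adapted : Nonanticipating g)

noncomputable def ofBets : BitPredStrategy where
  prob x o := o.elim (1 - ∑' t, m x t) fun p => if p.2 = g x p.1 then m x p.1 else 0
  nonneg x
    | none => sub_nonneg.2 (Real.tsum_le_of_sum_range_le (hm x) (hm_le x))
    | some p => by dsimp only [Option.elim]; split <;> simp [hm]
  total x := by
    have hsum : HasSum (m x) (∑' t, m x t) :=
      (summable_of_sum_range_le (hm x) (hm_le x)).hasSum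
    have hbets : HasSum (fun o : Option (ℕ × Bool) =>
        o.elim 0 fun p => if p.2 = g x p.1 then m x p.1 else 0) (∑' t, m x t) := by
      refine (Function.Injective.hasSum_iff (g := fun t => some (t, g x t))
        (fun t t' h => by simp_all) ?_).1 (by convert hsum using 1; ext t; simp)
      rintro (_ | ⟨t, z⟩) hz
      · rfl
      · exact if_neg fun h => hz ⟨t, by simp_all⟩
    convert (hasSum_ite_eq none (1 - ∑' t, m x t)).add hbets |>.tsum_eq using 1
    · exact tsum_congr fun o => by cases o <;> simp
    · ring
  adapted x x' i z h := by
    simp only [Option.elim, hm_adapted x x' i h, hg_adapted x x' i h]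

theorem sum_le_succBP_ofBets (x : ℕ → Bool) (T : ℕ) :
    ∑ t ∈ range T, (if x t = g x t then m x t else 0) ≤
      succBP (ofBets m g hm hm_le hm_adapted hg_adapted) x := by
  have hnonneg : ∀ t, 0 ≤ if x t = g x t then m x t else 0 := fun t => by
    split <;> simp [hm]
  refine Summable.sum_le_tsum _ (fun t _ => hnonneg t) ?_
  refine .of_nonneg_of_le hnonneg (fun t => ?_) (summable_of_sum_range_le (hm x) (hm_le x))
  split <;> simp [hm]

end BitPredStrategy

section Automaton

variable {Q : Type*} (Δ : Q → Bool → Q)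

theorem autoRun_eq_foldl (s : Q) (x : ℕ → Bool) (t : ℕ) :
    autoRun Δ s x t = ((List.range t).map x).foldl Δ s := by
  induction t with
  | zero => rfl
  | succ t ih => simp [autoRun, ih, List.range_succ]

theorem nonanticipating_autoRun (s : Q) : Nonanticipating (autoRun Δ s) := by
  intro x x' i h
  induction i with
  | zero => rfl
  | succ i ih =>
    simp only [autoRun, ih fun j hj => h j (by omega), h i (by omega)]

variable (B : Set Q)

-- `sInf ∅ = 0`: the value is junk when `B` is unreachable from `q`.
noncomputable def reachDist (q : Q) : ℕ :=
  sInf {n | ∃ l : List Bool, l.length = n ∧ l.foldl Δ q ∈ B}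

noncomputable def greedyBit (q : Q) : Bool :=
  decide (reachDist Δ B (Δ q true) < reachDist Δ B q)

variable {Δ B}

theorem exists_reachDist_lt {q : Q} (hq : q ∉ B) (hacc : ∃ l : List Bool, l.foldl Δ q ∈ B) :
    ∃ b, reachDist Δ B (Δ q b) < reachDist Δ B q := by
  obtain ⟨l₀, hl₀⟩ := hacc
  obtain ⟨l, hl_len, hl⟩ :=
    Nat.sInf_mem (s := {n | ∃ l : List Bool, l.length = n ∧ l.foldl Δ q ∈ B}) ⟨_, l₀, rfl, hl₀⟩
  rcases l with _ | ⟨b, l⟩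
  · exact absurd hl hq
  · refine ⟨b, lt_of_le_of_lt (Nat.sInf_le ⟨l, rfl, hl⟩) ?_⟩
    rw [reachDist, ← hl_len]
    exact Nat.lt_succ_self _

theorem reachDist_greedyBit_lt {q : Q} (hq : q ∉ B) (hacc : ∃ l : List Bool, l.foldl Δ q ∈ B) :
    reachDist Δ B (Δ q (greedyBit Δ B q)) < reachDist Δ B q := by
  obtain ⟨b, hb⟩ := exists_reachDist_lt hq hacc
  by_cases htrue : reachDist Δ B (Δ q true) < reachDist Δ B q
  · simp [greedyBit, htrue]
  · cases b
    · simpa [greedyBit, htrue] using hb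
    · exact absurd hb htrue

end Automaton

theorem sum_ite_add_two_mul_le {a s : ℕ → ℝ} {v : ℕ → Bool} (hs : ∀ t, 0 ≤ s t)
    (hvisit : ∀ t, v t → a (t + 1) ≤ a t / 2) (hother : ∀ t, v t = false → a (t + 1) ≤ a t + s t)
    (T : ℕ) :
    ∑ t ∈ range T, (if v t then a t else 0) + 2 * a T ≤ 2 * a 0 + 2 * ∑ t ∈ range T, s t := by
  induction T with
  | zero => simp
  | succ T ih =>
    rw [sum_range_succ, sum_range_succ]
    cases hvT : v T
    · simp only [Bool.false_eq_true, if_false, add_zero]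
      linarith [hother T hvT]
    · simp only [if_true]
      linarith [hvisit T hvT, hs T]

theorem exists_pow_le_half {η : ℝ} (hη : 0 < η) :
    ∃ (w : ℝ) (L : ℕ), 0 < w ∧ w ≤ 1 ∧ w ^ L ≤ 1 / 2 ∧ 1 ≤ w * (1 + η) := by
  refine ⟨(1 + η)⁻¹, ⌈η⁻¹⌉₊, by positivity, inv_le_one_of_one_le₀ (by linarith), ?_,
    by field_simp; rfl⟩
  have hL : 1 ≤ (⌈η⁻¹⌉₊ : ℝ) * η := by
    rw [← inv_mul_cancel₀ hη.ne']
    exact mul_le_mul_of_nonneg_right (Nat.le_ceil _) hη.le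
  have hpow := one_add_mul_le_pow (by linarith : (-2 : ℝ) ≤ η) ⌈η⁻¹⌉₊
  rw [inv_pow, one_div]
  exact inv_anti₀ (by norm_num) (by linarith)

structure BettingParams where
  κ : ℝ
  w : ℝ
  ϑ : ℝ
  L : ℕ
  κ_pos : 0 < κ
  κ_le_one : κ ≤ 1
  w_pos : 0 < w
  w_le_one : w ≤ 1
  ϑ_pos : 0 < ϑ
  ϑ_le_one : ϑ ≤ 1

namespace BettingParams

variable (p : BettingParams) (v : ℕ → Bool) (d : ℕ → ℕ)

def credit : ℕ → ℕ
  | 0 => 0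
  | t + 1 => if v t then credit t + p.L else credit t - 1

noncomputable def rate (t : ℕ) : ℝ :=
  if v t then 0 else p.κ * p.w ^ p.credit v t * p.ϑ ^ d t

noncomputable def reserve (T : ℕ) : ℝ :=
  ∏ t ∈ range T, (1 - p.rate v d t)

noncomputable def stake (t : ℕ) : ℝ :=
  p.rate v d t * p.reserve v d t

noncomputable def offer (t : ℕ) : ℝ :=
  p.κ * p.w ^ p.credit v t * p.ϑ ^ d t * p.reserve v d t

noncomputable def weightedReserve (t : ℕ) : ℝ :=
  p.w ^ p.credit v t * p.reserve v d t

theorem credit_succ_of_visit {t : ℕ} (ht : v t) : p.credit v (t + 1) = p.credit v t + p.L := by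
  simp [credit, ht]

theorem credit_succ_of_not_visit {t : ℕ} (ht : v t = false) :
    p.credit v (t + 1) = p.credit v t - 1 := by
  simp [credit, ht]

theorem w_pow_nonneg (n : ℕ) : 0 ≤ p.w ^ n := pow_nonneg p.w_pos.le n

theorem w_pow_le_one (n : ℕ) : p.w ^ n ≤ 1 := pow_le_one₀ p.w_pos.le p.w_le_one

theorem ϑ_pow_nonneg (n : ℕ) : 0 ≤ p.ϑ ^ n := pow_nonneg p.ϑ_pos.le n

theorem ϑ_pow_le_one (n : ℕ) : p.ϑ ^ n ≤ 1 := pow_le_one₀ p.ϑ_pos.le p.ϑ_le_one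

theorem rate_nonneg (t : ℕ) : 0 ≤ p.rate v d t := by
  unfold rate
  split
  · rfl
  · exact mul_nonneg (mul_nonneg p.κ_pos.le (p.w_pow_nonneg _)) (p.ϑ_pow_nonneg _)

theorem rate_le_κ (t : ℕ) : p.rate v d t ≤ p.κ := by
  unfold rate
  split
  · exact p.κ_pos.le
  · have := p.κ_pos
    have := p.w_pow_nonneg (p.credit v t)
    have := p.w_pow_le_one (p.credit v t)
    have := p.ϑ_pow_nonneg (d t)
    have := p.ϑ_pow_le_one (d t)
    calc p.κ * p.w ^ p.credit v t * p.ϑ ^ d t ≤ p.κ * 1 * 1 := by gcongr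
      _ = p.κ := by ring

theorem reserve_nonneg (T : ℕ) : 0 ≤ p.reserve v d T :=
  prod_nonneg fun t _ => by linarith [p.rate_le_κ v d t, p.κ_le_one]

theorem reserve_le_one (T : ℕ) : p.reserve v d T ≤ 1 :=
  prod_le_one (fun t _ => by linarith [p.rate_le_κ v d t, p.κ_le_one])
    fun t _ => by linarith [p.rate_nonneg v d t]

theorem reserve_succ (T : ℕ) : p.reserve v d (T + 1) = p.reserve v d T - p.stake v d T := by
  rw [reserve, prod_range_succ, ← reserve, stake]
  ring

theorem one_sub_κ_mul_reserve_le (T : ℕ) :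
    (1 - p.κ) * p.reserve v d T ≤ p.reserve v d (T + 1) := by
  rw [reserve, reserve, prod_range_succ, mul_comm]
  exact mul_le_mul_of_nonneg_left (by linarith [p.rate_le_κ v d T]) (p.reserve_nonneg v d T)

theorem stake_nonneg (t : ℕ) : 0 ≤ p.stake v d t :=
  mul_nonneg (p.rate_nonneg v d t) (p.reserve_nonneg v d t)

theorem sum_range_stake (T : ℕ) : ∑ t ∈ range T, p.stake v d t = 1 - p.reserve v d T := by
  induction T with
  | zero => simp [reserve]
  | succ T ih => rw [sum_range_succ, ih, reserve_succ]; ring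

theorem sum_range_stake_le_one (T : ℕ) : ∑ t ∈ range T, p.stake v d t ≤ 1 := by
  linarith [p.sum_range_stake v d T, p.reserve_nonneg v d T]

theorem summable_stake : Summable (p.stake v d) :=
  summable_of_sum_range_le (p.stake_nonneg v d) (p.sum_range_stake_le_one v d)

theorem stake_of_visit {t : ℕ} (ht : v t) : p.stake v d t = 0 := by
  simp [stake, rate, ht]

theorem stake_of_not_visit {t : ℕ} (ht : v t = false) : p.stake v d t = p.offer v d t := by
  simp [stake, rate, offer, ht]

theorem offer_nonneg (t : ℕ) : 0 ≤ p.offer v d t :=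
  mul_nonneg (mul_nonneg (mul_nonneg p.κ_pos.le (p.w_pow_nonneg _)) (p.ϑ_pow_nonneg _))
    (p.reserve_nonneg v d t)

theorem weightedReserve_nonneg (t : ℕ) : 0 ≤ p.weightedReserve v d t :=
  mul_nonneg (p.w_pow_nonneg _) (p.reserve_nonneg v d t)

theorem weightedReserve_le_one (t : ℕ) : p.weightedReserve v d t ≤ 1 :=
  mul_le_one₀ (p.w_pow_le_one _) (p.reserve_nonneg v d t) (p.reserve_le_one v d t)

theorem offer_le_κ_mul_weightedReserve (t : ℕ) :
    p.offer v d t ≤ p.κ * p.weightedReserve v d t := by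
  have h := mul_le_of_le_one_right (mul_nonneg p.κ_pos.le (p.weightedReserve_nonneg v d t))
    (p.ϑ_pow_le_one (d t))
  rw [offer, weightedReserve] at *
  linarith

theorem credit_congr {v v' : ℕ → Bool} {T : ℕ} (h : ∀ t < T, v t = v' t) :
    p.credit v T = p.credit v' T := by
  induction T with
  | zero => rfl
  | succ T ih => simp only [credit, ih fun t ht => h t (by omega), h T (by omega)]

theorem rate_congr {v v' : ℕ → Bool} {d d' : ℕ → ℕ} {T : ℕ} (hv : ∀ t ≤ T, v t = v' t)
    (hd : d T = d' T) : p.rate v d T = p.rate v' d' T := by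
  simp only [rate, hv T le_rfl, hd, p.credit_congr fun t ht => hv t ht.le]

theorem reserve_congr {v v' : ℕ → Bool} {d d' : ℕ → ℕ} {T : ℕ} (hv : ∀ t < T, v t = v' t)
    (hd : ∀ t < T, d t = d' t) : p.reserve v d T = p.reserve v' d' T :=
  prod_congr rfl fun t ht => by
    rw [p.rate_congr (fun j hj => hv j (by simp at ht; omega)) (hd t (by simpa using ht))]

theorem nonanticipating_stake {V : (ℕ → Bool) → ℕ → Bool} {D : (ℕ → Bool) → ℕ → ℕ}
    (hV : Nonanticipating V) (hD : Nonanticipating D) :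
    Nonanticipating fun x => p.stake (V x) (D x) := fun x x' i h => by
  dsimp only
  rw [stake, stake, p.rate_congr (fun t ht => hV.eq_of_le h ht) (hD x x' i h),
    p.reserve_congr (fun t ht => hV.eq_of_le h ht.le) (fun t ht => hD.eq_of_le h ht.le)]

theorem weightedReserve_succ_of_visit (hL : p.w ^ p.L ≤ 1 / 2) {t : ℕ} (ht : v t) :
    p.weightedReserve v d (t + 1) ≤ p.weightedReserve v d t / 2 := by
  have h := mul_le_mul_of_nonneg_left hL (p.weightedReserve_nonneg v d t)
  rw [weightedReserve, weightedReserve, reserve_succ, stake_of_visit p v d ht,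
    credit_succ_of_visit p v ht, pow_add] at *
  linarith

theorem weightedReserve_succ_le {N : ℕ} (hw : 1 ≤ p.w * (1 + p.κ * p.ϑ ^ N)) {t : ℕ}
    (hdt : d t ≤ N) (ht : v t = false) :
    p.weightedReserve v d (t + 1) ≤ p.weightedReserve v d t + p.stake v d t := by
  set c := p.credit v t
  set R := p.reserve v d t
  have hR := p.reserve_nonneg v d t
  have hpow : p.w ^ (c - 1) ≤ p.w ^ c * (1 + p.κ * p.ϑ ^ N) :=
    calc p.w ^ (c - 1) ≤ p.w ^ (c - 1) * (p.w * (1 + p.κ * p.ϑ ^ N)) :=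
          le_mul_of_one_le_right (p.w_pow_nonneg _) hw
      _ = p.w ^ (c - 1 + 1) * (1 + p.κ * p.ϑ ^ N) := by ring
      _ ≤ p.w ^ c * (1 + p.κ * p.ϑ ^ N) := by
          have := p.κ_pos
          have := p.ϑ_pow_nonneg N
          exact mul_le_mul_of_nonneg_right
            (pow_le_pow_of_le_one p.w_pos.le p.w_le_one (by omega)) (by positivity)
  have hϑ : p.ϑ ^ N ≤ p.ϑ ^ d t := pow_le_pow_of_le_one p.ϑ_pos.le p.ϑ_le_one hdt
  have hκ := p.κ_pos
  have hwc := p.w_pow_nonneg c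
  calc p.weightedReserve v d (t + 1) = p.w ^ (c - 1) * (R - p.stake v d t) := by
        rw [weightedReserve, reserve_succ, credit_succ_of_not_visit p v ht]
    _ ≤ p.w ^ (c - 1) * R := by
        gcongr
        · exact p.w_pow_nonneg _
        · linarith [p.stake_nonneg v d t]
    _ ≤ p.w ^ c * (1 + p.κ * p.ϑ ^ N) * R := by gcongr
    _ ≤ p.w ^ c * R + p.κ * p.w ^ c * p.ϑ ^ d t * R := by
        have : p.w ^ c * (p.κ * p.ϑ ^ N) * R ≤ p.w ^ c * (p.κ * p.ϑ ^ d t) * R := by gcongr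
        linarith
    _ = p.weightedReserve v d t + p.stake v d t := by
        rw [stake_of_not_visit p v d ht, offer, weightedReserve]

theorem sum_visits_weightedReserve_le {N : ℕ} (hL : p.w ^ p.L ≤ 1 / 2)
    (hw : 1 ≤ p.w * (1 + p.κ * p.ϑ ^ N)) (hd : ∀ t, d t ≤ N) (T : ℕ) :
    ∑ t ∈ range T, (if v t then p.weightedReserve v d t else 0) ≤ 4 := by
  have h := sum_ite_add_two_mul_le (p.stake_nonneg v d)
    (fun t => p.weightedReserve_succ_of_visit v d hL)
    (fun t => p.weightedReserve_succ_le v d hw (hd t)) T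
  have h0 : p.weightedReserve v d 0 = 1 := by simp [weightedReserve, reserve, credit]
  linarith [p.sum_range_stake_le_one v d T, p.weightedReserve_nonneg v d T]

theorem mul_offer_le_offer_succ {A : ℝ} (hA : (1 + A) * p.ϑ ≤ 1 - p.κ) {t : ℕ}
    (ht : v t = false) (hdt : d (t + 1) < d t) :
    (1 + A) * p.offer v d t ≤ p.offer v d (t + 1) := by
  rcases lt_or_ge (1 + A) 0 with hA0 | hA0
  · nlinarith [p.offer_nonneg v d t, p.offer_nonneg v d (t + 1)]
  set c := p.credit v t
  set R := p.reserve v d t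
  have hR := p.reserve_nonneg v d t
  have hκ := p.κ_pos
  have hw : p.w ^ c ≤ p.w ^ (c - 1) := pow_le_pow_of_le_one p.w_pos.le p.w_le_one (by omega)
  have hϑ : p.ϑ ^ d t ≤ p.ϑ ^ d (t + 1) * p.ϑ := by
    rw [← pow_succ]; exact pow_le_pow_of_le_one p.ϑ_pos.le p.ϑ_le_one hdt
  have := p.w_pow_nonneg c
  have := p.ϑ_pow_nonneg (d (t + 1))
  have := p.w_pow_nonneg (c - 1)
  calc (1 + A) * p.offer v d t = p.κ * p.w ^ c * p.ϑ ^ d t * ((1 + A) * R) := by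
        rw [offer]; ring
    _ ≤ p.κ * p.w ^ (c - 1) * (p.ϑ ^ d (t + 1) * p.ϑ) * ((1 + A) * R) := by
        have := p.ϑ_pow_nonneg (d t)
        gcongr
    _ = p.κ * p.w ^ (c - 1) * p.ϑ ^ d (t + 1) * ((1 + A) * p.ϑ * R) := by ring
    _ ≤ p.κ * p.w ^ (c - 1) * p.ϑ ^ d (t + 1) * p.reserve v d (t + 1) := by
        gcongr
        exact (mul_le_mul_of_nonneg_right hA hR).trans (p.one_sub_κ_mul_reserve_le v d t)
    _ = p.offer v d (t + 1) := by rw [offer, credit_succ_of_not_visit p v ht]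

theorem add_credit_le {t₀ : ℕ} (h : ∀ t ≥ t₀, v t = false → 1 ≤ p.credit v t) {T : ℕ}
    (hT : t₀ ≤ T) : T + p.credit v T ≤ t₀ + p.credit v t₀ + (p.L + 1) * cars v T := by
  induction T, hT using Nat.le_induction with
  | base => omega
  | succ T hT ih =>
    rw [cars_succ]
    cases hvT : v T
    · have := h T hT hvT
      rw [credit_succ_of_not_visit p v hvT]
      simp only [Bool.false_eq_true, if_false, add_zero]
      omega
    · rw [credit_succ_of_visit p v hvT, if_pos rfl, mul_add]
      omega

theorem exists_reserve_lt {N : ℕ} (hd : ∀ t, d t ≤ N) (hv : weaklySparse v) {ρ : ℝ}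
    (hρ : 0 < ρ) : ∃ T, p.reserve v d T < ρ := by
  by_contra! hR
  have hc : 0 < p.κ * p.ϑ ^ N * ρ := by have := p.κ_pos; have := p.ϑ_pos; positivity
  -- a non-visit without credit would stake at least `κ ϑ^N ρ`, which a summable series
  -- can do only finitely often
  have hcredit : ∀ᶠ t in atTop, v t = false → 1 ≤ p.credit v t := by
    filter_upwards [(p.summable_stake v d).tendsto_atTop_zero.eventually_lt_const hc]
      with t ht hvt
    by_contra! h0
    refine ht.not_ge ?_
    rw [stake_of_not_visit p v d hvt, offer, Nat.lt_one_iff.1 h0, pow_zero, mul_one]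
    have := p.κ_pos
    have := p.ϑ_pow_nonneg (d t)
    have := pow_le_pow_of_le_one p.ϑ_pos.le p.ϑ_le_one (hd t)
    have := hR t
    gcongr p.κ * ?_ * ?_
  obtain ⟨t₀, ht₀⟩ := eventually_atTop.1 hcredit
  obtain ⟨T, hT, hTt₀⟩ := ((hv.frequently_lt (t₀ + p.credit v t₀) (p.L + 1)).and_eventually
    (eventually_ge_atTop t₀)).exists
  have := p.add_credit_le v ht₀ hTt₀
  omega

section Accounting

variable (won : ℕ → Prop) [DecidablePred won]

noncomputable def gain (T : ℕ) : ℝ :=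
  ∑ t ∈ range T, if won t then p.stake v d t else 0

noncomputable def loss (T : ℕ) : ℝ :=
  ∑ t ∈ range T, if won t then 0 else p.stake v d t

theorem loss_add_gain (T : ℕ) : p.loss v d won T + p.gain v d won T = 1 - p.reserve v d T := by
  rw [loss, gain, ← sum_add_distrib, ← p.sum_range_stake v d T]
  exact sum_congr rfl fun t _ => by split <;> ring

theorem loss_nonneg (T : ℕ) : 0 ≤ p.loss v d won T :=
  sum_nonneg fun t _ => by split <;> simp [p.stake_nonneg]

-- Summed over `t`, the offers telescope.
theorem mul_ite_add_offer_le {A : ℝ} (hA : (1 + A) * p.ϑ ≤ 1 - p.κ)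
    (hfollow : ∀ t, v t = false → ¬won t → d (t + 1) < d t) (t : ℕ) :
    A * (if won t then 0 else p.stake v d t) + p.offer v d t ≤
      p.offer v d (t + 1) + (if won t then p.stake v d t else 0) +
        p.κ * (if v t then p.weightedReserve v d t else 0) := by
  have hnext := p.offer_nonneg v d (t + 1)
  cases hvt : v t
  · rw [stake_of_not_visit p v d hvt]
    by_cases hwon : won t
    · simp only [hwon, if_true, Bool.false_eq_true, if_false]
      linarith
    · simp only [hwon, if_false, Bool.false_eq_true]
      linarith [p.mul_offer_le_offer_succ v d hA hvt (hfollow t hvt hwon)]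
  · simp only [stake_of_visit p v d hvt, ite_self, if_true]
    linarith [p.offer_le_κ_mul_weightedReserve v d t]

theorem mul_loss_le {A : ℝ} {N : ℕ} (hA : (1 + A) * p.ϑ ≤ 1 - p.κ) (hL : p.w ^ p.L ≤ 1 / 2)
    (hw : 1 ≤ p.w * (1 + p.κ * p.ϑ ^ N)) (hd : ∀ t, d t ≤ N)
    (hfollow : ∀ t, v t = false → ¬won t → d (t + 1) < d t) (T : ℕ) :
    A * p.loss v d won T ≤ p.gain v d won T + 5 * p.κ := by
  have hsum := sum_le_sum fun t (_ : t ∈ range T) => p.mul_ite_add_offer_le v d won hA hfollow t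
  rw [sum_add_distrib, sum_add_distrib, sum_add_distrib, ← mul_sum, ← mul_sum, ← loss, ← gain]
    at hsum
  have htel := sum_range_sub (p.offer v d) T
  rw [sum_sub_distrib] at htel
  have hvisits := mul_le_mul_of_nonneg_left (p.sum_visits_weightedReserve_le v d hL hw hd T)
    p.κ_pos.le
  have hlast : p.offer v d T ≤ p.κ :=
    (p.offer_le_κ_mul_weightedReserve v d T).trans
      (mul_le_of_le_one_right p.κ_pos.le (p.weightedReserve_le_one v d T))
  linarith [p.offer_nonneg v d 0]

end Accounting

theorem exists_le_gain {e : ℝ} (he : 0 < e) (N : ℕ) :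
    ∃ p : BettingParams, ∀ (v : ℕ → Bool) (d : ℕ → ℕ) (won : ℕ → Prop) [DecidablePred won],
      weaklySparse v → (∀ t, d t ≤ N) → (∀ t, v t = false → ¬won t → d (t + 1) < d t) →
        ∃ T, 1 - e ≤ p.gain v d won T := by
  set A : ℝ := 4 / e
  set ϑ : ℝ := 4 / 5 / (1 + A)
  have hA : 0 < A := by positivity
  have hϑ : 0 < ϑ := by positivity
  have hϑA : (1 + A) * ϑ = 1 - 1 / 5 := by simp only [ϑ]; field_simp; norm_num
  obtain ⟨w, L, hw0, hw1, hL, hw⟩ := exists_pow_le_half (by positivity : 0 < 1 / 5 * ϑ ^ N)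
  let p : BettingParams := ⟨1 / 5, w, ϑ, L, by norm_num, by norm_num, hw0, hw1, hϑ, by nlinarith⟩
  refine ⟨p, fun v d won _ hv hd hfollow => ?_⟩
  obtain ⟨T, hT⟩ := p.exists_reserve_lt v d hd hv (half_pos he)
  refine ⟨T, ?_⟩
  have hloss : A * p.loss v d won T ≤ p.gain v d won T + 5 * (1 / 5) :=
    p.mul_loss_le v d won hϑA.le hL hw hd hfollow T
  have hsplit := p.loss_add_gain v d won T
  have hloss0 := p.loss_nonneg v d won T
  have hR := p.reserve_nonneg v d T
  -- `A · loss ≤ gain + 1 ≤ 2` forces `loss ≤ e / 2`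
  have : e * (A * p.loss v d won T) = 4 * p.loss v d won T := by simp only [A]; field_simp
  nlinarith

end BettingParams

/-- Theorem 4.1: if `B` is a strongly accessible set of states of a finite automaton
`M = (Q, s, Δ)` (accessible from every state accessible from `s`), then for every
`ε > 0` there is a bit-prediction strategy `S` with
`Succ^bp(S, A_{B,ws}) > 1 - ε`, where `A_{B,ws}` is the set of sequences `x` such that
the characteristic sequence of `V_B(x) = {t ≥ 0 : q_t(x) ∈ B}` is weakly sparse. -/
theorem automaton_bit_prediction {Q : Type} [Fintype Q] [DecidableEq Q]
    (s : Q) (Δ : Q → Bool → Q) (B : Finset Q)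
    (hsa : ∀ q : Q, (∃ l : List Bool, l.foldl Δ s = q) →
      ∃ l : List Bool, l.foldl Δ q ∈ B)
    (ε : ℝ) (hε : 0 < ε) :
    ∃ S : BitPredStrategy, ∃ c : ℝ, 1 - ε < c ∧
      ∀ x : ℕ → Bool,
        weaklySparse (fun t => decide (autoRun Δ s x t ∈ B)) →
        c ≤ succBP S x := by
  obtain ⟨N, hN⟩ := Finite.exists_le (reachDist Δ (B : Set Q))
  obtain ⟨p, hp⟩ := BettingParams.exists_le_gain (half_pos hε) N
  have hrun := nonanticipating_autoRun Δ s
  let V x t := decide (autoRun Δ s x t ∈ B)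
  let D x t := reachDist Δ (B : Set Q) (autoRun Δ s x t)
  let G x t := !greedyBit Δ (B : Set Q) (autoRun Δ s x t)
  have hV : Nonanticipating V := hrun.comp fun q => decide (q ∈ B)
  have hD : Nonanticipating D := hrun.comp (reachDist Δ (B : Set Q))
  have hG : Nonanticipating G := hrun.comp fun q => !greedyBit Δ (B : Set Q) q
  refine ⟨.ofBets (fun x => p.stake (V x) (D x)) G (fun x => p.stake_nonneg _ _)
    (fun x => p.sum_range_stake_le_one _ _) (p.nonanticipating_stake hV hD) hG,
    1 - ε / 2, by linarith, fun x hx => ?_⟩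
  have hfollow (t : ℕ) (hvt : V x t = false) (hxt : ¬x t = G x t) : D x (t + 1) < D x t := by
    have hq : autoRun Δ s x t ∉ B := by simpa [V] using hvt
    have hgreedy : x t = greedyBit Δ (B : Set Q) (autoRun Δ s x t) := by simpa [G] using hxt
    simp only [D, autoRun, hgreedy]
    exact reachDist_greedyBit_lt hq (hsa _ ⟨_, (autoRun_eq_foldl Δ s x t).symm⟩)
  obtain ⟨T, hT⟩ := hp (V x) (D x) (fun t => x t = G x t) hx (fun t => hN _) hfollow
  exact hT.trans
    (BitPredStrategy.sum_le_succBP_ofBets (fun x => p.stake (V x) (D x)) G _ _ _ _ x T)
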